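/- Let (Q_t)_{t≥0} be the transition semigroup of a measure-valued branching process on M(E) satisfying Condition 2.6. Then ‖Q_t(μ,·) − δ₀‖_var = 2(1 − e^{−μ(V̄_t)}) for every t > 0 and μ ∈ M(E), where δ₀ is the Dirac measure at the zero measure 0 ∈ M(E); moreover, lim_{t→∞} ‖Q_t(μ,·) − δ₀‖_var = 0 for every μ ∈ M(E) if and only if lim_{t→∞} V̄_t(x) = 0 for every x ∈ E. -/

import Mathlib

open MeasureTheory Filter Set
open scoped ENNReal NNReal Topology

noncomputable section

namespace DW

section TV

variable {α : Type*} [MeasurableSpace α]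

/-- The total variation measure `|μ - ν|` of the difference of two finite measures. -/
def tvMeasure (μ ν : Measure α) : Measure α := (μ - ν) + (ν - μ)

/-- The total variation norm `‖μ - ν‖_var` of the difference of two finite measures. -/
def tvNorm (μ ν : Measure α) : ℝ := (tvMeasure μ ν Set.univ).toReal

/-- `P` is a coupling of the probability measures `Q1` and `Q2`. -/
def IsCoupling (P : Measure (α × α)) (Q1 Q2 : Measure α) : Prop :=
  IsProbabilityMeasure P ∧ P.map Prod.fst = Q1 ∧ P.map Prod.snd = Q2

/-- Convolution of two measures on an additive monoid. -/
def mconv [Add α] (P1 P2 : Measure α) : Measure α :=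
  (P1.prod P2).map fun p => p.1 + p.2

end TV

/-- Supremum norm of a real valued function. -/
def supNorm {β : Type*} (f : β → ℝ) : ℝ := ⨆ x, |f x|

section Defs

variable {E : Type*} [MeasurableSpace E]

/-- The pairing `μ(f) = ∫_E f dμ`. -/
def pair (μ : FiniteMeasure E) (f : E → ℝ) : ℝ := ∫ x, f x ∂(μ : Measure E)

/-- `f` belongs to `B(E)⁺`: bounded nonnegative Borel functions. -/
def BddBorelNN (f : E → ℝ) : Prop :=
  Measurable f ∧ (∃ C, ∀ x, f x ≤ C) ∧ ∀ x, 0 ≤ f x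

/-- `f` belongs to `B(E)`: bounded Borel functions. -/
def BddBorel (f : E → ℝ) : Prop := Measurable f ∧ ∃ C, ∀ x, |f x| ≤ C

/-- The Dirac measure `δ_x` as a finite measure. -/
def diracFM (x : E) : FiniteMeasure E := ⟨Measure.dirac x, inferInstance⟩

variable [MeasurableSpace (FiniteMeasure E)]

/-- The cumulant semigroup `V_t f(x) = -log ∫ e^{-ν(f)} Q_t(δ_x, dν)`. -/
def cumulant (Q : ℝ → FiniteMeasure E → Measure (FiniteMeasure E))
    (t : ℝ) (f : E → ℝ) (x : E) : ℝ :=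
  - Real.log (∫ ν, Real.exp (-(pair ν f)) ∂(Q t (diracFM x)))

/-- The first-moment kernel `π_t f(x) = ∫ ν(f) Q_t(δ_x, dν)`. -/
def momentKernel (Q : ℝ → FiniteMeasure E → Measure (FiniteMeasure E))
    (t : ℝ) (f : E → ℝ) (x : E) : ℝ :=
  ∫ ν, pair ν f ∂(Q t (diracFM x))

/-- `(Q_t)` is the transition semigroup of a measure-valued branching process. -/
structure IsMBSemigroup (Q : ℝ → FiniteMeasure E → Measure (FiniteMeasure E)) : Prop where
  meas : ∀ t, 0 ≤ t → ∀ s : Set (FiniteMeasure E), MeasurableSet s →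
    Measurable fun μ => Q t μ s
  prob : ∀ t, 0 ≤ t → ∀ μ, IsProbabilityMeasure (Q t μ)
  init : ∀ μ, Q 0 μ = Measure.dirac μ
  chapman : ∀ s, 0 ≤ s → ∀ t, 0 ≤ t → ∀ μ, (Q s μ).bind (Q t) = Q (s + t) μ
  branching : ∀ t, 0 ≤ t → ∀ μ f, BddBorelNN f →
    ∫ ν, Real.exp (-(pair ν f)) ∂(Q t μ) = Real.exp (-(pair μ (cumulant Q t f)))

/-- Condition 2.1: the first moments exist, are bounded kernels, and satisfy the
first-moment formula. -/
def Condition21 (Q : ℝ → FiniteMeasure E → Measure (FiniteMeasure E)) : Prop :=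
  ∀ t, 0 ≤ t → ∀ f, BddBorelNN f →
    (∃ C, ∀ x, momentKernel Q t f x ≤ C) ∧
    ∀ μ : FiniteMeasure E, ∫ ν, pair ν f ∂(Q t μ) = pair μ (momentKernel Q t f)

/-- Condition 2.6: for each `t > 0` the increasing limit
`V̄_t(x) = lim_{λ→∞} V_t(λ 1)(x)` exists and is bounded on `E`. -/
def Condition26 (Q : ℝ → FiniteMeasure E → Measure (FiniteMeasure E))
    (Vbar : ℝ → E → ℝ) : Prop :=
  ∀ t, 0 < t →
    (∀ x, Tendsto (fun lam : ℝ => cumulant Q t (fun _ => lam) x) atTop (𝓝 (Vbar t x))) ∧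
    ∃ C, ∀ x, Vbar t x ≤ C

/-- The Wasserstein distance, relative to the total variation distance on `M(E)`,
between two probability measures on `M(E)`. -/
def W1 (Q1 Q2 : Measure (FiniteMeasure E)) : ℝ :=
  sInf { r | ∃ P, IsCoupling P Q1 Q2 ∧
    r = ∫ p, tvNorm ((p.1 : FiniteMeasure E) : Measure E) ((p.2 : FiniteMeasure E) : Measure E) ∂P }

/-- The Lipschitz constant of `F : M(E) → ℝ` relative to the total variation distance. -/
def Lvar (F : FiniteMeasure E → ℝ) : ℝ :=
  sSup { r | ∃ μ ν : FiniteMeasure E, μ ≠ ν ∧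
    r = |F μ - F ν| / tvNorm (μ : Measure E) (ν : Measure E) }

/-- `(N_t)` is a skew convolution semigroup associated with `(Q_t)`. -/
def IsSCSemigroup (Q : ℝ → FiniteMeasure E → Measure (FiniteMeasure E))
    (N : ℝ → Measure (FiniteMeasure E)) : Prop :=
  (∀ t, 0 ≤ t → IsProbabilityMeasure (N t)) ∧
  ∀ r, 0 ≤ r → ∀ t, 0 ≤ t → N (r + t) = mconv ((N r).bind (Q t)) (N t)

/-- `(K_t)_{t>0}` is an entrance law of probability measures for `(Q_t)`. -/
def IsEntranceLaw (Q : ℝ → FiniteMeasure E → Measure (FiniteMeasure E))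
    (K : ℝ → Measure (FiniteMeasure E)) : Prop :=
  (∀ r, 0 < r → IsProbabilityMeasure (K r)) ∧
  ∀ r, 0 < r → ∀ t, 0 ≤ t → (K r).bind (Q t) = K (r + t)

/-- `I_s(K, f) = -log ∫ e^{-ν(f)} K_s(dν)`. -/
def IK (K : ℝ → Measure (FiniteMeasure E)) (s : ℝ) (f : E → ℝ) : ℝ :=
  - Real.log (∫ ν, Real.exp (-(pair ν f)) ∂(K s))

/-- The kernel `γ(x, dy) = η(x, dy) + ∫ ν_x(dy) H(x, dν)`. -/
def gammaKer (η : E → Measure E) (H : E → Measure (FiniteMeasure E)) (x : E) :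
    Measure E :=
  η x + (H x).bind fun ν => ((ν : FiniteMeasure E) : Measure E).restrict {x}ᶜ

/-- The branching mechanism
`φ(x,f) = b(x)f(x) + c(x)f(x)² - γ(x,f) + ∫ [e^{-ν(f)} - 1 + ν(f)] H(x,dν)`. -/
def phi (b c : E → ℝ) (η : E → Measure E) (H : E → Measure (FiniteMeasure E))
    (x : E) (f : E → ℝ) : ℝ :=
  b x * f x + c x * f x ^ 2 - (∫ y, f y ∂(gammaKer η H x)) +
    ∫ ν, (Real.exp (-(pair ν f)) - 1 + pair ν f) ∂(H x)

/-- The local projection `φ₁` of the branching mechanism `φ`. -/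
def phi1 (b c : E → ℝ) (η : E → Measure E) (H : E → Measure (FiniteMeasure E))
    (x : E) (z : ℝ) : ℝ :=
  (b x - (gammaKer η H x Set.univ).toReal) * z + c x * z ^ 2 +
    ∫ ν, (Real.exp (-(z * (((ν : FiniteMeasure E) : Measure E) {x}).toReal)) - 1 +
      z * (((ν : FiniteMeasure E) : Measure E) {x}).toReal) ∂(H x)

/-- A spatially independent branching mechanism
`φ_*(z) = b_* z + c_* z² + ∫ (e^{-zu} - 1 + zu) m_*(du)`. -/
def phiStar (bs cs : ℝ) (m : Measure ℝ) (z : ℝ) : ℝ :=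
  bs * z + cs * z ^ 2 + ∫ u, (Real.exp (-(z * u)) - 1 + z * u) ∂m

/-- The data `(b_*, c_*, m_*)` of a spatially independent branching mechanism. -/
def IsBranchingMechanismStar (bs cs : ℝ) (m : Measure ℝ) : Prop :=
  0 ≤ cs ∧ m {u | u ≤ 0} = 0 ∧ (∫⁻ u, ENNReal.ofReal (min u (u ^ 2)) ∂m) < ⊤

/-- Grey's condition for `φ_*`. -/
def GreyCondition (bs cs : ℝ) (m : Measure ℝ) : Prop :=
  ∃ z0 : ℝ, 0 < z0 ∧ (∀ z, z0 ≤ z → 0 < phiStar bs cs m z) ∧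
    IntegrableOn (fun z => (phiStar bs cs m z)⁻¹) (Set.Ioi z0)

/-- `v` is the cumulant semigroup of the CB-process with branching mechanism `φ_*`:
the unique nonnegative solution of `∂_t v_t(λ) = -φ_*(v_t(λ))`, `v_0(λ) = λ`. -/
def IsCBCumulant (bs cs : ℝ) (m : Measure ℝ) (v : ℝ → ℝ → ℝ) : Prop :=
  ∀ lam, 0 ≤ lam → v 0 lam = lam ∧
    ∀ t, 0 ≤ t → 0 ≤ v t lam ∧ HasDerivAt (fun s => v s lam) (-(phiStar bs cs m (v t lam))) t

/-- `(P_t)` is the transition semigroup of a Borel right process: a semigroup of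
Markov probability kernels on `E`. -/
structure IsMarkovSemigroup (P : ℝ → E → Measure E) : Prop where
  meas : ∀ t, 0 ≤ t → ∀ s : Set E, MeasurableSet s → Measurable fun x => P t x s
  prob : ∀ t, 0 ≤ t → ∀ x, IsProbabilityMeasure (P t x)
  init : ∀ x, P 0 x = Measure.dirac x
  chapman : ∀ s, 0 ≤ s → ∀ t, 0 ≤ t → ∀ x, (P s x).bind (P t) = P (s + t) x

/-- `π` is the first-moment semigroup of the `(ξ,φ)`-superprocess: the unique
locally bounded nonnegative solution of
`π_t f(x) = P_t f(x) + ∫_0^t P_{t-s}((γ - b) π_s f)(x) ds`. -/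
def IsMomentSemigroup (P : ℝ → E → Measure E) (b : E → ℝ) (γ : E → Measure E)
    (π : ℝ → (E → ℝ) → E → ℝ) : Prop :=
  (∀ t, 0 ≤ t → ∀ f, BddBorelNN f → ∀ x, 0 ≤ π t f x) ∧
  (∀ f, BddBorelNN f → ∀ T, 0 ≤ T → ∃ C, ∀ t ∈ Set.Icc (0 : ℝ) T, ∀ x, π t f x ≤ C) ∧
  ∀ f, BddBorelNN f → ∀ t, 0 ≤ t → ∀ x,
    π t f x = (∫ y, f y ∂(P t x)) +
      ∫ s in Set.Ioc (0 : ℝ) t, ∫ y, ((∫ z, π s f z ∂(γ y)) - b y * π s f y) ∂(P (t - s) x)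

/-- The data of a `(ξ,φ)`-superprocess: the underlying Markov semigroup `P`, the
branching mechanism parameters `b`, `c`, `η`, `H`, the cumulant semigroup `V`
(the unique locally bounded nonnegative solution of the evolution equation), and
the transition semigroup `Q` on `M(E)` determined by the Laplace functional. -/
structure Superprocess (P : ℝ → E → Measure E) (b c : E → ℝ)
    (η : E → Measure E) (H : E → Measure (FiniteMeasure E))
    (V : ℝ → (E → ℝ) → E → ℝ)
    (Q : ℝ → FiniteMeasure E → Measure (FiniteMeasure E)) : Prop where
  markov : IsMarkovSemigroup P
  hb : BddBorel b
  hc : BddBorel c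
  hcnn : ∀ x, 0 ≤ c x
  hηmeas : ∀ s : Set E, MeasurableSet s → Measurable fun x => η x s
  hηbdd : ∃ C : ℝ≥0, ∀ x, η x Set.univ ≤ (C : ℝ≥0∞)
  hHmeas : ∀ s : Set (FiniteMeasure E), MeasurableSet s → Measurable fun x => H x s
  hHzero : ∀ x, H x {0} = 0
  hHsf : ∀ x, SigmaFinite (H x)
  hHmom : ∃ C : ℝ≥0, ∀ x,
    (∫⁻ ν, (min (ν.mass : ℝ≥0∞) ((ν.mass : ℝ≥0∞) ^ 2) +
      ((ν : FiniteMeasure E) : Measure E) {x}ᶜ) ∂(H x)) ≤ (C : ℝ≥0∞)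
  hVnn : ∀ t, 0 ≤ t → ∀ f, BddBorelNN f → ∀ x, 0 ≤ V t f x
  hVbdd : ∀ f, BddBorelNN f → ∀ T, 0 ≤ T → ∃ C, ∀ t ∈ Set.Icc (0 : ℝ) T, ∀ x, V t f x ≤ C
  hVeq : ∀ f, BddBorelNN f → ∀ t, 0 ≤ t → ∀ x,
    V t f x = (∫ y, f y ∂(P t x)) -
      ∫ s in Set.Ioc (0 : ℝ) t, ∫ y, phi b c η H y (V s f) ∂(P (t - s) x)
  hQmeas : ∀ t, 0 ≤ t → ∀ s : Set (FiniteMeasure E), MeasurableSet s →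
    Measurable fun μ => Q t μ s
  hQprob : ∀ t, 0 ≤ t → ∀ μ, IsProbabilityMeasure (Q t μ)
  hQlaplace : ∀ t, 0 ≤ t → ∀ μ f, BddBorelNN f →
    ∫ ν, Real.exp (-(pair ν f)) ∂(Q t μ) = Real.exp (-(pair μ (V t f)))

end Defs

end DW
namespace DW

/-! Taking `f = λ·1` in the branching property and letting `λ → ∞`, the Laplace functional
of `Q_t(μ,·)` tends to its mass at the zero measure, while `μ(V_t(λ·1))` increases to `μ(V̄_t)`;
hence `Q_t(μ,{0}) = e^{-μ(V̄_t)}`, and for a probability measure `P` the distance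
`‖P - δ₀‖_var` equals `2(1 - P{0})`. Since the zero measure is absorbing, `Q_t(μ,{0})` increases
and `V̄_t` decreases in `t`, so dominated convergence under `V̄_1` turns pointwise convergence
`V̄_t → 0` into `μ(V̄_t) → 0`; conversely, take `μ = δ_x`. -/

lemma tendsto_two_mul_one_sub_exp_neg_iff {α : Type*} {l : Filter α} {g : α → ℝ} :
    Tendsto (fun a => 2 * (1 - Real.exp (-g a))) l (𝓝 0) ↔ Tendsto g l (𝓝 0) := by
  constructor
  · intro h
    have hinv : ∀ a, -Real.log (1 - 2 * (1 - Real.exp (-g a)) / 2) = g a := fun a => by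
      rw [show 1 - 2 * (1 - Real.exp (-g a)) / 2 = Real.exp (-g a) by ring, Real.log_exp, neg_neg]
    have hcont : ContinuousAt (fun z : ℝ => -Real.log (1 - z / 2)) 0 :=
      ((Real.continuousAt_log (by norm_num)).comp (by fun_prop)).neg
    simpa [Function.comp_def, hinv] using hcont.tendsto.comp h
  · intro h
    have hexp : Tendsto (fun a => Real.exp (-g a)) l (𝓝 1) := by
      simpa [Function.comp_def] using (Real.continuous_exp.tendsto (-0)).comp h.neg
    simpa using (hexp.const_sub 1).const_mul 2

section TotalVariation

variable {α : Type*} [MeasurableSpace α] {μ ν : Measure α} {s : Set α}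

lemma sub_apply_of_restrict_le_restrict [IsFiniteMeasure ν] (hs : MeasurableSet s)
    (h : ν.restrict s ≤ μ.restrict s) : (μ - ν) s = μ s - ν s := by
  rw [← Measure.restrict_apply_self, Measure.restrict_sub_eq_restrict_sub_restrict hs,
    Measure.sub_apply hs h, Measure.restrict_apply_self, Measure.restrict_apply_self]

lemma tvMeasure_univ_of_restrict_le [IsFiniteMeasure μ] [IsFiniteMeasure ν]
    (hs : MeasurableSet s) (hνμ : ν.restrict s ≤ μ.restrict s)
    (hμν : μ.restrict sᶜ ≤ ν.restrict sᶜ) :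
    tvMeasure μ ν univ = (μ s - ν s) + (ν sᶜ - μ sᶜ) := by
  rw [tvMeasure, Measure.add_apply, ← measure_add_measure_compl hs,
    ← measure_add_measure_compl hs (μ := ν - μ),
    sub_apply_of_restrict_le_restrict hs hνμ,
    Measure.sub_apply_eq_zero_of_restrict_le_restrict hμν hs.compl,
    Measure.sub_apply_eq_zero_of_restrict_le_restrict hνμ hs,
    sub_apply_of_restrict_le_restrict hs.compl hμν, add_zero, zero_add]

lemma tvNorm_dirac (P : Measure α) [IsProbabilityMeasure P] {a : α}
    (ha : MeasurableSet ({a} : Set α)) :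
    tvNorm P (Measure.dirac a) = 2 * (1 - (P {a}).toReal) := by
  have hδa : Measure.dirac a {a} = 1 := Measure.dirac_apply_of_mem (mem_singleton a)
  have hδac : Measure.dirac a {a}ᶜ = 0 := by simp [Measure.dirac_apply' _ ha.compl]
  have hle : P.restrict {a} ≤ (Measure.dirac a).restrict {a} := by
    rw [Measure.restrict_singleton, Measure.restrict_singleton, hδa]
    exact IsOrderedSMul.smul_le_smul_right _ _ prob_le_one _
  have hzero : (Measure.dirac a).restrict {a}ᶜ = 0 := Measure.restrict_eq_zero.mpr hδac
  rw [tvNorm, tvMeasure_univ_of_restrict_le ha.compl (hzero ▸ Measure.zero_le _)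
      (by rwa [compl_compl]), compl_compl, hδa, hδac, tsub_zero, prob_compl_eq_one_sub ha,
    ENNReal.toReal_add (by finiteness) (by finiteness),
    ENNReal.toReal_sub_of_le prob_le_one ENNReal.one_ne_top, ENNReal.toReal_one]
  ring

end TotalVariation

section FiniteMeasures

variable {E : Type*} [MeasurableSpace E]

lemma pair_const (ν : FiniteMeasure E) (lam : ℝ) :
    pair ν (fun _ => lam) = ν.mass * lam := by
  rw [pair, integral_const, smul_eq_mul]
  rfl

lemma pair_diracFM {f : E → ℝ} (hf : Measurable f) (x : E) : pair (diracFM x) f = f x :=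
  integral_dirac' f x hf.stronglyMeasurable

lemma pair_zero (f : E → ℝ) : pair (0 : FiniteMeasure E) f = 0 := by
  rw [pair, FiniteMeasure.toMeasure_zero, integral_zero_measure]

lemma exp_neg_pair_const_le_one (ν : FiniteMeasure E) {lam : ℝ} (hlam : 0 ≤ lam) :
    Real.exp (-(pair ν (fun _ => lam))) ≤ 1 := by
  rw [Real.exp_le_one_iff, neg_nonpos, pair_const]
  positivity

lemma tendsto_exp_neg_pair_const (ν : FiniteMeasure E) :
    Tendsto (fun lam : ℝ => Real.exp (-(pair ν (fun _ => lam)))) atTop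
      (𝓝 (({0} : Set (FiniteMeasure E)).indicator 1 ν)) := by
  simp_rw [pair_const]
  by_cases hν : ν = 0
  · simp [hν]
  · have hm : 0 < (ν.mass : ℝ) := by
      simpa [pos_iff_ne_zero] using (FiniteMeasure.mass_nonzero_iff ν).mpr hν
    rw [indicator_of_notMem (show ν ∉ ({0} : Set _) from hν)]
    exact Real.tendsto_exp_atBot.comp <| tendsto_neg_atTop_atBot.comp <|
      tendsto_id.const_mul_atTop hm

variable [MeasurableSpace (FiniteMeasure E)] {P : Measure (FiniteMeasure E)}

def laplace (P : Measure (FiniteMeasure E)) (f : E → ℝ) : ℝ :=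
  ∫ ν, Real.exp (-(pair ν f)) ∂P

lemma laplace_const_zero [IsProbabilityMeasure P] : laplace P (fun _ => 0) = 1 := by
  simp [laplace, pair_const]

variable [TopologicalSpace E] [OpensMeasurableSpace E] [BorelSpace (FiniteMeasure E)]

lemma measurable_diracFM : Measurable (diracFM : E → FiniteMeasure E) :=
  (ProbabilityMeasure.toFiniteMeasure_continuous.comp continuous_diracProba).measurable

lemma measurableSet_singleton_zero : MeasurableSet ({0} : Set (FiniteMeasure E)) := by
  have h : ({0} : Set (FiniteMeasure E)) = FiniteMeasure.mass ⁻¹' {0} := by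
    ext ν
    simp [FiniteMeasure.mass_zero_iff]
  rw [h]
  exact FiniteMeasure.continuous_mass.measurable (measurableSet_singleton 0)

lemma measurable_exp_neg_pair_const (lam : ℝ) :
    Measurable fun ν : FiniteMeasure E => Real.exp (-(pair ν (fun _ => lam))) := by
  simp_rw [pair_const]
  fun_prop

lemma integrable_exp_neg_pair_const [IsFiniteMeasure P] {lam : ℝ} (hlam : 0 ≤ lam) :
    Integrable (fun ν => Real.exp (-(pair ν (fun _ => lam)))) P := by
  refine (integrable_const (1 : ℝ)).mono' (measurable_exp_neg_pair_const lam).aestronglyMeasurable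
    (ae_of_all _ fun ν => ?_)
  rw [Real.norm_of_nonneg (Real.exp_nonneg _)]
  exact exp_neg_pair_const_le_one ν hlam

lemma laplace_const_pos [IsFiniteMeasure P] [NeZero P] {lam : ℝ} (hlam : 0 ≤ lam) :
    0 < laplace P (fun _ => lam) :=
  integral_exp_pos (integrable_exp_neg_pair_const hlam)

lemma laplace_const_antitoneOn [IsFiniteMeasure P] :
    AntitoneOn (fun lam : ℝ => laplace P (fun _ => lam)) (Ici 0) := by
  intro a ha b hb hab
  refine integral_mono (integrable_exp_neg_pair_const hb) (integrable_exp_neg_pair_const ha)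
    fun ν => ?_
  simp only [pair_const, Real.exp_le_exp, neg_le_neg_iff]
  gcongr

lemma tendsto_laplace_const [IsFiniteMeasure P] :
    Tendsto (fun lam : ℝ => laplace P (fun _ => lam)) atTop (𝓝 (P {0}).toReal) := by
  rw [← measureReal_def, ← integral_indicator_one measurableSet_singleton_zero]
  refine tendsto_integral_filter_of_dominated_convergence (fun _ => 1)
    (Eventually.of_forall fun lam => (measurable_exp_neg_pair_const lam).aestronglyMeasurable)
    ?_ (integrable_const 1) (ae_of_all _ tendsto_exp_neg_pair_const)
  filter_upwards [eventually_ge_atTop 0] with lam hlam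
  refine ae_of_all _ fun ν => ?_
  rw [Real.norm_of_nonneg (Real.exp_nonneg _)]
  exact exp_neg_pair_const_le_one ν hlam

end FiniteMeasures

namespace IsMBSemigroup

variable {E : Type*} [MeasurableSpace E] [MeasurableSpace (FiniteMeasure E)]
  {Q : ℝ → FiniteMeasure E → Measure (FiniteMeasure E)} {Vbar : ℝ → E → ℝ} {s t : ℝ}

lemma measurable (hQ : IsMBSemigroup Q) (ht : 0 ≤ t) : Measurable (Q t) :=
  Measure.measurable_of_measurable_coe _ (hQ.meas t ht)

lemma cumulant_const_zero (hQ : IsMBSemigroup Q) (ht : 0 ≤ t) (x : E) :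
    cumulant Q t (fun _ => 0) x = 0 := by
  have := hQ.prob t ht (diracFM x)
  rw [cumulant, ← laplace, laplace_const_zero, Real.log_one, neg_zero]

variable [TopologicalSpace E] [OpensMeasurableSpace E] [BorelSpace (FiniteMeasure E)]

lemma cumulant_const_monotoneOn (hQ : IsMBSemigroup Q) (ht : 0 ≤ t) (x : E) :
    MonotoneOn (fun lam : ℝ => cumulant Q t (fun _ => lam) x) (Ici 0) := by
  have := hQ.prob t ht (diracFM x)
  intro a ha b hb hab
  exact neg_le_neg <| Real.log_le_log (laplace_const_pos hb) (laplace_const_antitoneOn ha hb hab)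

lemma measurable_cumulant_const (hQ : IsMBSemigroup Q) (ht : 0 ≤ t) (lam : ℝ) :
    Measurable (cumulant Q t (fun _ => lam)) := by
  let κ : ProbabilityTheory.Kernel E (FiniteMeasure E) :=
    ⟨fun x => Q t (diracFM x), (hQ.measurable ht).comp measurable_diracFM⟩
  have hL : Measurable fun x => laplace (Q t (diracFM x)) (fun _ => lam) :=
    ((measurable_exp_neg_pair_const lam).stronglyMeasurable.integral_kernel (κ := κ)).measurable
  exact hL.log.neg

lemma cumulant_const_le_vbar (hQ : IsMBSemigroup Q) (h26 : Condition26 Q Vbar) (ht : 0 < t)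
    {lam : ℝ} (hlam : 0 ≤ lam) (x : E) : cumulant Q t (fun _ => lam) x ≤ Vbar t x := by
  refine ge_of_tendsto ((h26 t ht).1 x) ?_
  filter_upwards [eventually_ge_atTop lam] with l hl
  exact hQ.cumulant_const_monotoneOn ht.le x hlam (hlam.trans hl) hl

lemma vbar_nonneg (hQ : IsMBSemigroup Q) (h26 : Condition26 Q Vbar) (ht : 0 < t) (x : E) :
    0 ≤ Vbar t x :=
  hQ.cumulant_const_zero ht.le x ▸ hQ.cumulant_const_le_vbar h26 ht le_rfl x

lemma measurable_vbar (hQ : IsMBSemigroup Q) (h26 : Condition26 Q Vbar) (ht : 0 < t) :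
    Measurable (Vbar t) :=
  measurable_of_tendsto_metrizable' atTop (hQ.measurable_cumulant_const ht.le)
    (tendsto_pi_nhds.mpr (h26 t ht).1)

lemma tendsto_pair_cumulant_const (hQ : IsMBSemigroup Q) (h26 : Condition26 Q Vbar)
    (ht : 0 < t) (μ : FiniteMeasure E) :
    Tendsto (fun lam : ℝ => pair μ (cumulant Q t (fun _ => lam))) atTop
      (𝓝 (pair μ (Vbar t))) := by
  obtain ⟨C, hC⟩ := (h26 t ht).2
  refine tendsto_integral_filter_of_dominated_convergence (fun _ => C)
    (Eventually.of_forall fun lam => (hQ.measurable_cumulant_const ht.le lam).aestronglyMeasurable)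
    ?_ (integrable_const C) (ae_of_all _ (h26 t ht).1)
  filter_upwards [eventually_ge_atTop 0] with lam hlam
  refine ae_of_all _ fun x => ?_
  have hnonneg : 0 ≤ cumulant Q t (fun _ => lam) x :=
    hQ.cumulant_const_zero ht.le x ▸ hQ.cumulant_const_monotoneOn ht.le x self_mem_Ici hlam hlam
  rw [Real.norm_of_nonneg hnonneg]
  exact (hQ.cumulant_const_le_vbar h26 ht hlam x).trans (hC x)

lemma toReal_apply_singleton_zero (hQ : IsMBSemigroup Q) (h26 : Condition26 Q Vbar)
    (ht : 0 < t) (μ : FiniteMeasure E) :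
    (Q t μ {0}).toReal = Real.exp (-(pair μ (Vbar t))) := by
  have := hQ.prob t ht.le μ
  have hlaplace : (fun lam : ℝ => Real.exp (-(pair μ (cumulant Q t (fun _ => lam)))))
      =ᶠ[atTop] fun lam => laplace (Q t μ) (fun _ => lam) := by
    filter_upwards [eventually_ge_atTop 0] with lam hlam
    exact (hQ.branching t ht.le μ _ ⟨measurable_const, ⟨lam, fun _ => le_rfl⟩, fun _ => hlam⟩).symm
  refine tendsto_nhds_unique tendsto_laplace_const (Tendsto.congr' hlaplace ?_)
  exact (Real.continuous_exp.tendsto _).comp (hQ.tendsto_pair_cumulant_const h26 ht μ).neg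

lemma apply_zero_singleton_zero (hQ : IsMBSemigroup Q) (h26 : Condition26 Q Vbar) (ht : 0 ≤ t) :
    Q t 0 {0} = 1 := by
  rcases ht.eq_or_lt with rfl | ht
  · rw [hQ.init, Measure.dirac_apply_of_mem (mem_singleton 0)]
  · have := hQ.prob t ht.le 0
    rw [← ENNReal.toReal_eq_one_iff, hQ.toReal_apply_singleton_zero h26 ht, pair_zero,
      neg_zero, Real.exp_zero]

lemma apply_singleton_zero_mono (hQ : IsMBSemigroup Q) (h26 : Condition26 Q Vbar) (hs : 0 ≤ s)
    (hst : s ≤ t) (μ : FiniteMeasure E) : Q s μ {0} ≤ Q t μ {0} := by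
  have hts : 0 ≤ t - s := sub_nonneg.mpr hst
  calc Q s μ {0} = ∫⁻ η in {0}, Q (t - s) η {0} ∂(Q s μ) := by
        rw [lintegral_singleton' (hQ.meas _ hts _ measurableSet_singleton_zero),
          hQ.apply_zero_singleton_zero h26 hts, one_mul]
    _ ≤ ∫⁻ η, Q (t - s) η {0} ∂(Q s μ) := setLIntegral_le_lintegral _ _
    _ = Q t μ {0} := by
        rw [← Measure.bind_apply measurableSet_singleton_zero (hQ.measurable hts).aemeasurable,
          hQ.chapman s hs (t - s) hts, add_sub_cancel]

lemma vbar_antitoneOn (hQ : IsMBSemigroup Q) (h26 : Condition26 Q Vbar) (x : E) :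
    AntitoneOn (fun t => Vbar t x) (Ioi 0) := by
  intro s hs t ht hst
  have := hQ.prob t (le_of_lt ht) (diracFM x)
  have hmono := ENNReal.toReal_mono (measure_ne_top _ _)
    (hQ.apply_singleton_zero_mono h26 (le_of_lt hs) hst (diracFM x))
  rw [hQ.toReal_apply_singleton_zero h26 hs, hQ.toReal_apply_singleton_zero h26 ht,
    pair_diracFM (hQ.measurable_vbar h26 hs), pair_diracFM (hQ.measurable_vbar h26 ht),
    Real.exp_le_exp, neg_le_neg_iff] at hmono
  exact hmono

lemma tendsto_pair_vbar_zero (hQ : IsMBSemigroup Q) (h26 : Condition26 Q Vbar)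
    (h : ∀ x, Tendsto (fun t => Vbar t x) atTop (𝓝 0)) (μ : FiniteMeasure E) :
    Tendsto (fun t => pair μ (Vbar t)) atTop (𝓝 0) := by
  obtain ⟨C, hC⟩ := (h26 1 one_pos).2
  have hint : Integrable (Vbar 1) (μ : Measure E) :=
    (integrable_const C).mono' (hQ.measurable_vbar h26 one_pos).aestronglyMeasurable
      (ae_of_all _ fun x => by rw [Real.norm_of_nonneg (hQ.vbar_nonneg h26 one_pos x)]; exact hC x)
  have hbound : ∀ᶠ t in atTop, ∀ᵐ x ∂(μ : Measure E), ‖Vbar t x‖ ≤ Vbar 1 x := by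
    filter_upwards [eventually_ge_atTop 1] with t ht
    refine ae_of_all _ fun x => ?_
    rw [Real.norm_of_nonneg (hQ.vbar_nonneg h26 (one_pos.trans_le ht) x)]
    exact hQ.vbar_antitoneOn h26 x (mem_Ioi.2 one_pos) (mem_Ioi.2 (one_pos.trans_le ht)) ht
  simpa [pair] using tendsto_integral_filter_of_dominated_convergence (Vbar 1)
    ((eventually_gt_atTop 0).mono fun t ht => (hQ.measurable_vbar h26 ht).aestronglyMeasurable)
    hbound hint (ae_of_all _ h)

lemma tvNorm_apply_dirac_zero (hQ : IsMBSemigroup Q) (h26 : Condition26 Q Vbar) (ht : 0 < t)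
    (μ : FiniteMeasure E) :
    tvNorm (Q t μ) (Measure.dirac 0) = 2 * (1 - Real.exp (-(pair μ (Vbar t)))) := by
  have := hQ.prob t ht.le μ
  rw [tvNorm_dirac _ measurableSet_singleton_zero, hQ.toReal_apply_singleton_zero h26 ht]

end IsMBSemigroup

theorem total_variation_to_zero_MB_general
    {E : Type*} [TopologicalSpace E] [MeasurableSpace E] [BorelSpace E]
    [MeasurableSpace (FiniteMeasure E)] [BorelSpace (FiniteMeasure E)]
    (Q : ℝ → FiniteMeasure E → Measure (FiniteMeasure E))
    (hQ : IsMBSemigroup Q) (Vbar : ℝ → E → ℝ) (h26 : Condition26 Q Vbar) :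
    (∀ t, 0 < t → ∀ μ : FiniteMeasure E,
      tvNorm (Q t μ) (Measure.dirac (0 : FiniteMeasure E))
        = 2 * (1 - Real.exp (-(pair μ (Vbar t))))) ∧
    ((∀ μ : FiniteMeasure E,
        Tendsto (fun t => tvNorm (Q t μ) (Measure.dirac (0 : FiniteMeasure E)))
          atTop (𝓝 0)) ↔
      ∀ x : E, Tendsto (fun t => Vbar t x) atTop (𝓝 0)) := by
  have htv (μ : FiniteMeasure E) :
      Tendsto (fun t => tvNorm (Q t μ) (Measure.dirac 0)) atTop (𝓝 0) ↔
        Tendsto (fun t => pair μ (Vbar t)) atTop (𝓝 0) := by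
    rw [← tendsto_two_mul_one_sub_exp_neg_iff (g := fun t => pair μ (Vbar t))]
    refine tendsto_congr' ?_
    filter_upwards [eventually_gt_atTop 0] with t ht
    exact hQ.tvNorm_apply_dirac_zero h26 ht μ
  refine ⟨fun t ht μ => hQ.tvNorm_apply_dirac_zero h26 ht μ, fun h x => ?_,
    fun h μ => (htv μ).2 (hQ.tendsto_pair_vbar_zero h26 h μ)⟩
  refine ((htv (diracFM x)).1 (h (diracFM x))).congr' ?_
  filter_upwards [eventually_gt_atTop 0] with t ht
  exact pair_diracFM (hQ.measurable_vbar h26 ht) x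

/-- Corollary 2.10: `‖Q_t(μ,·) - δ₀‖_var = 2(1 - e^{-μ(V̄_t)})`,
and ergodicity to `δ₀` in total variation holds iff `V̄_t(x) → 0` for every `x`. -/
theorem total_variation_to_zero_MB
    {E : Type*} [TopologicalSpace E] [MeasurableSpace E] [BorelSpace E]
    [StandardBorelSpace E]
    [MeasurableSpace (FiniteMeasure E)] [BorelSpace (FiniteMeasure E)]
    (Q : ℝ → FiniteMeasure E → Measure (FiniteMeasure E))
    (hQ : IsMBSemigroup Q) (Vbar : ℝ → E → ℝ) (h26 : Condition26 Q Vbar) :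
    (∀ t, 0 < t → ∀ μ : FiniteMeasure E,
      tvNorm (Q t μ) (Measure.dirac (0 : FiniteMeasure E))
        = 2 * (1 - Real.exp (-(pair μ (Vbar t))))) ∧
    ((∀ μ : FiniteMeasure E,
        Tendsto (fun t => tvNorm (Q t μ) (Measure.dirac (0 : FiniteMeasure E)))
          atTop (𝓝 0)) ↔
      ∀ x : E, Tendsto (fun t => Vbar t x) atTop (𝓝 0)) :=
  total_variation_to_zero_MB_general Q hQ Vbar h26

end DW
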